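/- Lemma (chain-selection, quantitative form): Let α ∈ (0,1) and δ ∈ (0,1/2]. Let J be a finite set of jobs feasible on m machines, let j* be a job, and let S ⊆ J be a set of α-tight jobs each of which δ-dominates j*. Let j ∈ S be a job of maximum laxity in S, i.e., ℓ_{j'} ≤ ℓ_j for all j' ∈ S, and assume ℓ_j ≥ 1. Then the number of jobs j' ∈ S that are not dominated by j (i.e., with I(j') ⊄⊆ I(j)) is at most 16m/(αδ) + m/α. -/

import Mathlib

/-- A job given by integer release date `r`, deadline `d`, and processing time `p`. -/
structure Job where
  r : ℤ
  d : ℤ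
  p : ℤ
deriving DecidableEq

/-- A job is valid if `1 ≤ p` and `r + p ≤ d`. -/
def Job.valid (j : Job) : Prop := 1 ≤ j.p ∧ j.r + j.p ≤ j.d

/-- The interval `I(j) = {t ∈ ℤ : r ≤ t < d}` of a job. -/
noncomputable def Job.interval (j : Job) : Finset ℤ := Finset.Ico j.r j.d

/-- The laxity `ℓ_j = d - r - p` of a job. -/
def Job.lax (j : Job) : ℤ := j.d - j.r - j.p

/-- The contribution `C(j, I) = max {0, |I ∩ I(j)| - ℓ_j}` of a job to a finite set `I ⊆ ℤ`. -/
noncomputable def contribution (j : Job) (I : Finset ℤ) : ℤ :=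
  max 0 (((I ∩ j.interval).card : ℤ) - j.lax)

/-- A finite set of jobs `J` is feasible on `m` machines. -/
def Feasible (J : Finset Job) (m : ℕ) : Prop :=
  ∃ σ : ℤ → Finset Job,
    (∀ t, σ t ⊆ J) ∧
    (∀ t, (σ t).card ≤ m) ∧
    (∀ t, ∀ j ∈ σ t, j.r ≤ t ∧ t < j.d) ∧
    (∀ j ∈ J, ((Finset.Ico j.r j.d).filter (fun t => j ∈ σ t)).card = j.p.toNat)

/-- A job is `α`-tight if `p_j > α (d_j - r_j)`. -/
def AlphaTight (α : ℝ) (j : Job) : Prop := α * ((j.d : ℝ) - (j.r : ℝ)) < (j.p : ℝ)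

/-- The `β`-interval `I_β(j) = [r_j + βℓ_j, d_j - βℓ_j)` of a job (a real interval). -/
def betaInterval (β : ℝ) (j : Job) : Set ℝ :=
  Set.Ico ((j.r : ℝ) + β * (j.lax : ℝ)) ((j.d : ℝ) - β * (j.lax : ℝ))

/-- Two jobs are agreeable if `(r_j - r_{j'})·(d_j - d_{j'}) ≥ 0`. -/
def Agreeable (j j' : Job) : Prop :=
  0 ≤ ((j.r : ℝ) - (j'.r : ℝ)) * ((j.d : ℝ) - (j'.d : ℝ))

/-- Two jobs are `β`-agreeable if they are agreeable and their `β`-intervals intersect. -/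
def BetaAgreeable (β : ℝ) (j j' : Job) : Prop :=
  Agreeable j j' ∧ (betaInterval β j ∩ betaInterval β j').Nonempty

/-- `j` δ-dominates `j*`: `I(j*) ⊆ I(j)` (as integer intervals) and, viewing intervals
as real intervals, `[r_{j*}, d_{j*}) ∩ I_δ(j) ≠ ∅`. -/
def DeltaDominates (δ : ℝ) (j jstar : Job) : Prop :=
  jstar.interval ⊆ j.interval ∧
  (Set.Ico (jstar.r : ℝ) (jstar.d : ℝ) ∩ betaInterval δ j).Nonempty

/-!
Call a job of `S` bad if its interval is not contained in `I(j)`. A bad job contains `I(j*)`,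
has laxity at most `ℓ := ℓ_j`, and, since it sticks out of `I(j)` while `j` δ-dominates `j*`,
has length more than `δℓ`. Feasibility enters only through `∑_{j'} C(j', I) ≤ m |I|`: a job is
processed at least `|I ∩ I(j')| - ℓ_{j'}` times inside `I`, and at most `m` jobs run at a time.

If `|I(j*)| > 2ℓ`, every bad job contributes at least `|I(j*)| / 2` to `I(j*)`, so there are at
most `2m` of them. Otherwise use the window `W = [r* - 2ℓ, d* + 2ℓ)` of length at most `6ℓ`:
a bad job inside `W` contributes `p > αδℓ`, and one sticking out of `W` covers at least `2ℓ`
of it and so contributes at least `ℓ`. Hence there are at most `6m/(αδ)` bad jobs.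
-/

open Finset

section Scheduling

lemma Job.card_interval {j : Job} (h : j.r ≤ j.d) : (#j.interval : ℤ) = j.d - j.r := by
  rw [Job.interval, Int.card_Ico, Int.toNat_of_nonneg (by omega)]

lemma sub_lax_le_contribution (j : Job) (I : Finset ℤ) :
    (#(I ∩ j.interval) : ℤ) - j.lax ≤ contribution j I :=
  le_max_right _ _

lemma Job.p_le_contribution {j : Job} (hj : j.valid) {I : Finset ℤ} (h : j.interval ⊆ I) :
    j.p ≤ contribution j I := by
  have hC := sub_lax_le_contribution j I
  rw [inter_eq_right.mpr h, Job.card_interval (by linarith [hj.1, hj.2]), Job.lax] at hC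
  linarith

lemma contribution_le_card_filter {j : Job} (hj : j.valid) {σ : ℤ → Finset Job}
    (hp : #((Ico j.r j.d).filter (fun t => j ∈ σ t)) = j.p.toNat) (I : Finset ℤ) :
    contribution j I ≤ #(I.filter (fun t => j ∈ σ t)) := by
  set A := (Ico j.r j.d).filter (fun t => j ∈ σ t)
  have hin : #(A.filter (· ∈ I)) ≤ #(I.filter (fun t => j ∈ σ t)) :=
    card_le_card fun t ht => by simp only [A, mem_filter] at ht ⊢; tauto
  have hout : #(A.filter (· ∉ I)) ≤ #(j.interval \ I) :=
    card_le_card fun t ht => by simp only [A, Job.interval, mem_filter, mem_sdiff] at ht ⊢; tauto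
  have hsplit := card_filter_add_card_filter_not (s := A) (· ∈ I)
  have hinter := card_sdiff_add_card_inter j.interval I
  have hlen := Job.card_interval (j := j) (by linarith [hj.1, hj.2])
  rw [hp] at hsplit
  rw [inter_comm] at hinter
  refine max_le (Nat.cast_nonneg _) ?_
  simp only [Job.lax]
  omega

lemma sum_card_filter_mem_le {J : Finset Job} {m : ℕ} {σ : ℤ → Finset Job}
    (hsub : ∀ t, σ t ⊆ J) (hcard : ∀ t, #(σ t) ≤ m) (I : Finset ℤ) :
    ∑ j ∈ J, #(I.filter (fun t => j ∈ σ t)) ≤ m * #I := by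
  have hσ : ∀ t, J.filter (· ∈ σ t) = σ t := fun t => filter_mem_eq_inter.trans
    (inter_eq_right.mpr (hsub t))
  calc ∑ j ∈ J, #(I.filter (fun t => j ∈ σ t))
      = ∑ t ∈ I, #(J.filter (· ∈ σ t)) :=
        sum_card_bipartiteAbove_eq_sum_card_bipartiteBelow (fun j t => j ∈ σ t)
    _ ≤ ∑ _t ∈ I, m := sum_le_sum fun t _ => (hσ t).symm ▸ hcard t
    _ = m * #I := by rw [sum_const, smul_eq_mul, mul_comm]

variable {J : Finset Job} {m : ℕ}

theorem Feasible.sum_contribution_le (hfeas : Feasible J m) (hJ : ∀ j ∈ J, j.valid)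
    (I : Finset ℤ) : ∑ j ∈ J, contribution j I ≤ m * #I := by
  obtain ⟨σ, hsub, hcard, -, hp⟩ := hfeas
  calc ∑ j ∈ J, contribution j I
      ≤ ∑ j ∈ J, (#(I.filter (fun t => j ∈ σ t)) : ℤ) :=
        sum_le_sum fun j hj => contribution_le_card_filter (hJ j hj) (hp j hj) I
    _ ≤ m * #I := by exact_mod_cast sum_card_filter_mem_le hsub hcard I

theorem Feasible.card_mul_le (hfeas : Feasible J m) (hJ : ∀ j ∈ J, j.valid) {T : Finset Job}
    (hT : T ⊆ J) {I : Finset ℤ} {c : ℝ} (hc : ∀ j ∈ T, c ≤ contribution j I) :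
    #T * c ≤ m * #I := by
  calc #T * c ≤ ∑ j ∈ T, (contribution j I : ℝ) := by
        simpa [nsmul_eq_mul] using card_nsmul_le_sum T _ c hc
    _ ≤ ∑ j ∈ J, (contribution j I : ℝ) :=
        sum_le_sum_of_subset_of_nonneg hT fun j _ _ => by exact_mod_cast le_max_left _ _
    _ ≤ m * #I := by exact_mod_cast hfeas.sum_contribution_le hJ I

end Scheduling

lemma Job.interval_subset_interval_iff {i j : Job} (hi : i.r < i.d) :
    i.interval ⊆ j.interval ↔ j.r ≤ i.r ∧ i.d ≤ j.d :=
  Ico_subset_Ico_iff hi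

lemma Job.min_p_sub_lax_le_contribution_window {j jstar : Job} (hj : j.valid)
    (hjs : jstar.r < jstar.d) (hsub : jstar.interval ⊆ j.interval) (k : ℤ) :
    min j.p (k - j.lax) ≤ contribution j (Ico (jstar.r - k) (jstar.d + k)) := by
  by_cases hin : j.interval ⊆ Ico (jstar.r - k) (jstar.d + k)
  · exact (min_le_left _ _).trans (j.p_le_contribution hj hin)
  · have hout : j.r < jstar.r - k ∨ jstar.d + k < j.d := by
      by_contra! h
      exact hin (Ico_subset_Ico h.1 h.2)
    have hrd := (Job.interval_subset_interval_iff hjs).mp hsub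
    have hC := sub_lax_le_contribution j (Ico (jstar.r - k) (jstar.d + k))
    rw [Job.interval, Ico_inter_Ico, Int.card_Ico] at hC
    omega

lemma DeltaDominates.mul_lax_lt_length {δ : ℝ} {j jstar j' : Job}
    (hdom : DeltaDominates δ j jstar) (hjs : jstar.r < jstar.d)
    (hsub : jstar.interval ⊆ j'.interval) (hnot : ¬ j'.interval ⊆ j.interval) :
    δ * j.lax < j'.d - j'.r := by
  obtain ⟨-, x, ⟨hx1, hx2⟩, hx3, hx4⟩ := hdom
  have hrd := (Job.interval_subset_interval_iff hjs).mp hsub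
  have hout : j'.r < j.r ∨ j.d < j'.d := by
    by_contra! h
    exact hnot (Ico_subset_Ico h.1 h.2)
  have hr : (j'.r : ℝ) ≤ jstar.r := by exact_mod_cast hrd.1
  have hd : (jstar.d : ℝ) ≤ j'.d := by exact_mod_cast hrd.2
  rcases hout with h | h
  · have h' : (j'.r : ℝ) < j.r := by exact_mod_cast h
    linarith
  · have h' : (j.d : ℝ) < j'.d := by exact_mod_cast h
    linarith

section Counting

variable {J : Finset Job} {m : ℕ} {T : Finset Job}

theorem Feasible.card_le_two_mul (hfeas : Feasible J m) (hJ : ∀ j ∈ J, j.valid) (hT : T ⊆ J)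
    {I : Finset ℤ} (hI : I.Nonempty) (h : ∀ j ∈ T, I ⊆ j.interval ∧ 2 * j.lax ≤ #I) :
    #T ≤ 2 * m := by
  have hc : ∀ j ∈ T, (#I : ℝ) / 2 ≤ contribution j I := fun j hj => by
    have hC := sub_lax_le_contribution j I
    rw [inter_eq_left.mpr (h j hj).1] at hC
    have hC' : (#I : ℝ) - j.lax ≤ contribution j I := by exact_mod_cast hC
    have hlax : 2 * (j.lax : ℝ) ≤ #I := by exact_mod_cast (h j hj).2
    linarith
  have hmul := hfeas.card_mul_le hJ hT hc
  have hIpos : (0 : ℝ) < #I := by exact_mod_cast hI.card_pos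
  have : (#T : ℝ) ≤ 2 * m := by nlinarith
  exact_mod_cast this

theorem Feasible.card_le_of_short_window (hfeas : Feasible J m) (hJ : ∀ j ∈ J, j.valid)
    (hT : T ⊆ J) {α δ : ℝ} (hα : 0 < α) (hδ : 0 < δ) (hαδ : α * δ ≤ 1) {jstar : Job}
    (hjs : jstar.r < jstar.d) {L : ℤ} (hshort : jstar.d - jstar.r ≤ 2 * L)
    (h : ∀ j ∈ T, jstar.interval ⊆ j.interval ∧ j.lax ≤ L ∧ AlphaTight α j ∧
      δ * L < j.d - j.r) :
    #T ≤ 6 * m / (α * δ) := by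
  have hL : (0 : ℝ) < L := by exact_mod_cast (by omega : 0 < L)
  set W := Ico (jstar.r - 2 * L) (jstar.d + 2 * L) with hWdef
  have hc : ∀ j ∈ T, α * δ * L ≤ contribution j W :=
    fun j hj => by
      obtain ⟨hsub, hlax, htight, hlong⟩ := h j hj
      have hC := j.min_p_sub_lax_le_contribution_window (hJ j (hT hj)) hjs hsub (2 * L)
      have hC' : min (j.p : ℝ) (2 * L - j.lax) ≤ contribution j W := by exact_mod_cast hC
      have hlax' : (j.lax : ℝ) ≤ L := by exact_mod_cast hlax
      have hp : α * δ * L < j.p := by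
        unfold AlphaTight at htight
        nlinarith
      have hk : α * δ * L ≤ 2 * L - j.lax := by nlinarith
      exact (le_min hp.le hk).trans hC'
  have hmul := hfeas.card_mul_le hJ hT hc
  have hW : (#W : ℝ) ≤ 6 * L := by
    have : (#W : ℤ) ≤ 6 * L := by
      rw [hWdef, Int.card_Ico]; omega
    exact_mod_cast this
  rw [le_div_iff₀ (by positivity)]
  have : #T * (α * δ) * L ≤ 6 * m * L := by nlinarith [hmul]
  exact le_of_mul_le_mul_right this hL

end Counting

theorem chain_selection_bound_general
    (α δ : ℝ) (hα : α ∈ Set.Ioo (0 : ℝ) 1) (hδ : δ ∈ Set.Ioc (0 : ℝ) (1 / 2))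
    (J : Finset Job) (hJ : ∀ j ∈ J, j.valid) (m : ℕ) (hfeas : Feasible J m)
    (jstar : Job) (hjs : jstar.valid)
    (S : Finset Job) (hS : S ⊆ J)
    (htight : ∀ j ∈ S, AlphaTight α j)
    (hdom : ∀ j ∈ S, DeltaDominates δ j jstar)
    (j : Job) (hjS : j ∈ S) (hmax : ∀ j' ∈ S, j'.lax ≤ j.lax) :
    ({j' : Job | j' ∈ S ∧ ¬ j'.interval ⊆ j.interval}.ncard : ℝ)
        ≤ 16 * (m : ℝ) / (α * δ) + (m : ℝ) / α := by
  obtain ⟨hα0, hα1⟩ := hα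
  obtain ⟨hδ0, hδ1⟩ := hδ
  have hjs' : jstar.r < jstar.d := by linarith [hjs.1, hjs.2]
  set N := S.filter (fun j' => ¬ j'.interval ⊆ j.interval)
  have hN : {j' : Job | j' ∈ S ∧ ¬ j'.interval ⊆ j.interval} = N := by ext; simp [N]
  have hNJ : N ⊆ J := (filter_subset _ _).trans hS
  have hbad : ∀ j' ∈ N, jstar.interval ⊆ j'.interval ∧ j'.lax ≤ j.lax ∧ AlphaTight α j' ∧
      δ * j.lax < j'.d - j'.r := fun j' hj' => by
    obtain ⟨hj'S, hnot⟩ := mem_filter.mp hj'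
    have hsub := (hdom j' hj'S).1
    exact ⟨hsub, hmax j' hj'S, htight j' hj'S, (hdom j hjS).mul_lax_lt_length hjs' hsub hnot⟩
  have hαδ : α * δ ≤ 1 := by nlinarith
  have hNbound : (#N : ℝ) ≤ 6 * m / (α * δ) := by
    rcases le_or_gt (jstar.d - jstar.r) (2 * j.lax) with hshort | hlong
    · exact hfeas.card_le_of_short_window hJ hNJ hα0 hδ0 hαδ hjs' hshort hbad
    · have hcard := Job.card_interval hjs'.le
      have h2m : #N ≤ 2 * m := hfeas.card_le_two_mul hJ hNJ (I := jstar.interval)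
        (nonempty_Ico.mpr hjs') fun j' hj' => ⟨(hbad j' hj').1, by linarith [(hbad j' hj').2.1]⟩
      calc (#N : ℝ) ≤ 2 * m := by exact_mod_cast h2m
        _ ≤ 6 * m / (α * δ) := by
          rw [le_div_iff₀ (by positivity)]; nlinarith [(Nat.cast_nonneg m : (0 : ℝ) ≤ m)]
  have h16 : 6 * (m : ℝ) / (α * δ) ≤ 16 * m / (α * δ) := by gcongr; norm_num
  have hmα : 0 ≤ (m : ℝ) / α := by positivity
  rw [hN, Set.ncard_coe_finset]
  linarith

/-- chain-selection, quantitative form: if every job of `S ⊆ J` is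
α-tight and δ-dominates `j*`, and `j ∈ S` has maximum laxity in `S` with `ℓ_j ≥ 1`,
then at most `16m/(αδ) + m/α` jobs of `S` are not dominated by `j`. -/
theorem chain_selection_bound
    (α δ : ℝ) (hα : α ∈ Set.Ioo (0 : ℝ) 1) (hδ : δ ∈ Set.Ioc (0 : ℝ) (1 / 2))
    (J : Finset Job) (hJ : ∀ j ∈ J, j.valid) (m : ℕ) (hfeas : Feasible J m)
    (jstar : Job) (hjs : jstar.valid)
    (S : Finset Job) (hS : S ⊆ J)
    (htight : ∀ j ∈ S, AlphaTight α j)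
    (hdom : ∀ j ∈ S, DeltaDominates δ j jstar)
    (j : Job) (hjS : j ∈ S) (hmax : ∀ j' ∈ S, j'.lax ≤ j.lax) (hlax : 1 ≤ j.lax) :
    ({j' : Job | j' ∈ S ∧ ¬ j'.interval ⊆ j.interval}.ncard : ℝ)
        ≤ 16 * (m : ℝ) / (α * δ) + (m : ℝ) / α :=
  chain_selection_bound_general α δ hα hδ J hJ m hfeas jstar hjs S hS htight hdom j hjS hmax
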